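/- For positive reals μ₁,...,μₙ and real p ≥ 1, the quantity gain(p) := n·(Σᵢ μᵢ^{2(p-1)}) / (Σᵢ μᵢ^{p-1})² is monotone nondecreasing in p; moreover if the μᵢ are not all equal, gain is strictly increasing in p. -/

import Mathlib

/-!
Write `gain (1 + t) = n * M(2t) / M(t)²` with `M(t) = ∑ i, exp (uᵢ t)` and `uᵢ = log μᵢ`.
With `xᵢ = exp (uᵢ t)`, the derivative of `M(2t) / M(t)²` has the sign of the weighted
Chebyshev difference `(∑ xᵢ² uᵢ)(∑ xᵢ) - (∑ xᵢ²)(∑ xᵢ uᵢ)`. Twice it equals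
`∑ᵢⱼ xᵢ xⱼ (xᵢ - xⱼ)(uᵢ - uⱼ)`, whose terms are nonnegative for `t ≥ 0`, since `xᵢ` is then
a nondecreasing function of `uᵢ`, and positive for `t > 0` whenever `uᵢ ≠ uⱼ`.
-/

open Finset Real

section Chebyshev

variable {ι : Type*} [Fintype ι] (w a b : ι → ℝ)

lemma two_mul_sum_mul_sum_sub_sum_mul_sum :
    2 * ((∑ i, w i * a i * b i) * ∑ i, w i - (∑ i, w i * a i) * ∑ i, w i * b i) =
      ∑ i, ∑ j, w i * w j * ((a i - a j) * (b i - b j)) := by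
  have expand : ∀ i j, w i * w j * ((a i - a j) * (b i - b j)) =
      w i * a i * b i * w j + w j * a j * b j * w i
        - w i * a i * (w j * b j) - w j * a j * (w i * b i) := fun _ _ ↦ by ring
  simp only [expand, sum_add_distrib, sum_sub_distrib, ← mul_sum, ← sum_mul]
  ring

variable {w a b}

lemma sum_mul_sum_le_sum_mul_sum_of_monovary (hw : ∀ i, 0 ≤ w i) (hab : Monovary a b) :
    (∑ i, w i * a i) * ∑ i, w i * b i ≤ (∑ i, w i * a i * b i) * ∑ i, w i := by
  have key : 0 ≤ ∑ i, ∑ j, w i * w j * ((a i - a j) * (b i - b j)) :=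
    sum_nonneg fun i _ ↦ sum_nonneg fun j _ ↦
      mul_nonneg (mul_nonneg (hw i) (hw j)) (hab.sub_mul_sub_nonneg j i)
  linarith [two_mul_sum_mul_sum_sub_sum_mul_sum w a b]

lemma sum_mul_sum_lt_sum_mul_sum_of_monovary (hw : ∀ i, 0 < w i) (hab : Monovary a b)
    {i j : ι} (hij : 0 < (a i - a j) * (b i - b j)) :
    (∑ i, w i * a i) * ∑ i, w i * b i < (∑ i, w i * a i * b i) * ∑ i, w i := by
  have term_nonneg : ∀ k l, 0 ≤ w k * w l * ((a k - a l) * (b k - b l)) := fun k l ↦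
    mul_nonneg (mul_pos (hw k) (hw l)).le (hab.sub_mul_sub_nonneg l k)
  have key : 0 < ∑ k, ∑ l, w k * w l * ((a k - a l) * (b k - b l)) :=
    sum_pos' (fun k _ ↦ sum_nonneg fun l _ ↦ term_nonneg k l)
      ⟨i, mem_univ i, sum_pos' (fun l _ ↦ term_nonneg i l)
        ⟨j, mem_univ j, mul_pos (mul_pos (hw i) (hw j)) hij⟩⟩
  linarith [two_mul_sum_mul_sum_sub_sum_mul_sum w a b]

end Chebyshev

lemma exp_mul_sub_exp_mul_mul_sub_pos {x y t : ℝ} (ht : 0 < t) (hxy : x ≠ y) :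
    0 < (exp (x * t) - exp (y * t)) * (x - y) := by
  rcases hxy.lt_or_gt with h | h
  · exact mul_pos_of_neg_of_neg (sub_neg.2 (exp_lt_exp.2 (mul_lt_mul_of_pos_right h ht)))
      (sub_neg.2 h)
  · exact mul_pos (sub_pos.2 (exp_lt_exp.2 (mul_lt_mul_of_pos_right h ht))) (sub_pos.2 h)

lemma exp_mul_two_mul (x t : ℝ) : exp (x * (2 * t)) = exp (x * t) * exp (x * t) := by
  rw [← exp_add]
  ring_nf

section ExpSum

variable {ι : Type*} (u : ι → ℝ)

lemma monovary_exp_mul {t : ℝ} (ht : 0 ≤ t) : Monovary (fun i ↦ exp (u i * t)) u :=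
  fun _ _ h ↦ exp_le_exp.2 (mul_le_mul_of_nonneg_right h.le ht)

variable [Fintype ι]

noncomputable def expSum (t : ℝ) : ℝ := ∑ i, exp (u i * t)

lemma expSum_pos [Nonempty ι] (t : ℝ) : 0 < expSum u t :=
  sum_pos (fun _ _ ↦ exp_pos _) univ_nonempty

lemma hasDerivAt_expSum (t : ℝ) : HasDerivAt (expSum u) (∑ i, exp (u i * t) * u i) t := by
  unfold expSum
  refine HasDerivAt.fun_sum fun i _ ↦ ?_
  simpa [mul_comm] using ((hasDerivAt_id t).const_mul (u i)).exp

lemma hasDerivAt_expSum_two_mul_div_sq [Nonempty ι] (t : ℝ) :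
    HasDerivAt (fun t ↦ expSum u (2 * t) / expSum u t ^ 2)
      (2 * ((∑ i, exp (u i * t) * exp (u i * t) * u i) * expSum u t -
          (∑ i, exp (u i * t) * exp (u i * t)) * ∑ i, exp (u i * t) * u i) /
        expSum u t ^ 3) t := by
  have hM₂ := (hasDerivAt_expSum u (2 * t)).comp t ((hasDerivAt_id t).const_mul 2)
  have hM := hasDerivAt_expSum u t
  refine (hM₂.div (hM.fun_pow 2) (pow_ne_zero 2 (expSum_pos u t).ne')).congr_deriv ?_
  have hM_pos := expSum_pos u t
  simp only [Function.comp_apply, expSum, exp_mul_two_mul] at hM_pos ⊢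
  generalize ∑ i, exp (u i * t) = M at hM_pos ⊢
  generalize ∑ i, exp (u i * t) * exp (u i * t) * u i = A
  generalize ∑ i, exp (u i * t) * exp (u i * t) = B
  generalize ∑ i, exp (u i * t) * u i = C
  field_simp
  ring

lemma monotoneOn_expSum_two_mul_div_sq [Nonempty ι] :
    MonotoneOn (fun t ↦ expSum u (2 * t) / expSum u t ^ 2) (Set.Ici 0) := by
  refine monotoneOn_of_hasDerivWithinAt_nonneg (convex_Ici 0)
    (fun t _ ↦ (hasDerivAt_expSum_two_mul_div_sq u t).continuousAt.continuousWithinAt)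
    (fun t _ ↦ (hasDerivAt_expSum_two_mul_div_sq u t).hasDerivWithinAt) fun t ht ↦ ?_
  rw [interior_Ici] at ht
  have chebyshev := sum_mul_sum_le_sum_mul_sum_of_monovary (fun k ↦ (exp_pos (u k * t)).le)
    (monovary_exp_mul u ht.le)
  exact div_nonneg (mul_nonneg zero_le_two (sub_nonneg.2 chebyshev))
    (pow_pos (expSum_pos u t) 3).le

lemma strictMonoOn_expSum_two_mul_div_sq {i j : ι} (hij : u i ≠ u j) :
    StrictMonoOn (fun t ↦ expSum u (2 * t) / expSum u t ^ 2) (Set.Ici 0) := by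
  have : Nonempty ι := ⟨i⟩
  refine strictMonoOn_of_hasDerivWithinAt_pos (convex_Ici 0)
    (fun t _ ↦ (hasDerivAt_expSum_two_mul_div_sq u t).continuousAt.continuousWithinAt)
    (fun t _ ↦ (hasDerivAt_expSum_two_mul_div_sq u t).hasDerivWithinAt) fun t ht ↦ ?_
  rw [interior_Ici] at ht
  have chebyshev := sum_mul_sum_lt_sum_mul_sum_of_monovary (fun k ↦ exp_pos (u k * t))
    (monovary_exp_mul u ht.le) (exp_mul_sub_exp_mul_mul_sub_pos ht hij)
  exact div_pos (mul_pos zero_lt_two (sub_pos.2 chebyshev)) (pow_pos (expSum_pos u t) 3)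

end ExpSum

/-- For positive reals `μ i` the gain `p ↦ n * (∑ μᵢ^(2(p-1))) / (∑ μᵢ^(p-1))²`
is monotone nondecreasing on `[1, ∞)`, and strictly increasing if the `μ i`
are not all equal. -/
theorem gain_monotone (n : ℕ) (hn : 1 ≤ n) (μ : Fin n → ℝ) (hμ : ∀ i, 0 < μ i)
    (gain : ℝ → ℝ)
    (hgain : ∀ p, gain p =
      n * (∑ i, μ i ^ (2 * (p - 1))) / (∑ i, μ i ^ (p - 1)) ^ 2) :
    (∀ p q, 1 ≤ p → p ≤ q → gain p ≤ gain q) ∧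
    ((∃ i j, μ i ≠ μ j) → ∀ p q, 1 ≤ p → p < q → gain p < gain q) := by
  have : Nonempty (Fin n) := ⟨⟨0, hn⟩⟩
  set u : Fin n → ℝ := fun i ↦ log (μ i)
  have gain_eq : ∀ p, gain p = n * (expSum u (2 * (p - 1)) / expSum u (p - 1) ^ 2) := by
    intro p
    simp only [hgain, mul_div_assoc, expSum, u, rpow_def_of_pos (hμ _)]
  refine ⟨fun p q hp hpq ↦ ?_, fun ⟨i, j, hij⟩ p q hp hpq ↦ ?_⟩
  · rw [gain_eq, gain_eq]
    refine mul_le_mul_of_nonneg_left ?_ n.cast_nonneg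
    exact monotoneOn_expSum_two_mul_div_sq u (sub_nonneg.2 hp)
      (sub_nonneg.2 (hp.trans hpq)) (by linarith)
  · have hu : u i ≠ u j := fun h ↦ hij (log_injOn_pos (hμ i) (hμ j) h)
    rw [gain_eq, gain_eq]
    refine mul_lt_mul_of_pos_left ?_ (by exact_mod_cast hn)
    exact strictMonoOn_expSum_two_mul_div_sq u hu (sub_nonneg.2 hp)
      (sub_nonneg.2 (hp.trans hpq.le)) (by linarith)
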